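/- Let (g, ·) be a commutative associative algebra over a field K and define, for triples x = (x₁,x₂,x₃), y = (y₁,y₂,y₃), z = (z₁,z₂,z₃) ∈ g³, the determinant-type expression |x y z| = Σ_{σ∈S₃} sgn(σ) x_{σ(1)} · y_{σ(2)} · z_{σ(3)}. If N : g → g is a Nijenhuis operator on (g, ·) and N(x) denotes componentwise application of N, then |N(x) N(y) N(z)| = N( |N(x) N(y) z| + |N(y) N(z) x| + |N(z) N(x) y| ) − N²( |N(x) y z| + |N(y) z x| + |N(z) x y| ) + N³( |x y z| ) for all x, y, z ∈ g³. -/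

import Mathlib

/-!
Multiplying the Nijenhuis identity for `N a * N b` by `N c`, and applying the identity once more
to `N (a * b) * N c`, writes `N a * N b * N c` through `N`, `N²` and `N³` of products with fewer
factors `N`. Summed over the six signed terms of the determinant, the terms of this formula in
which the columns appear cyclically shifted become determinants again after reindexing by a
3-cycle, which is an even permutation.
-/

/-- The determinant-type expression `|x y z| = ∑_{σ ∈ S₃} sgn(σ) x_{σ(1)} y_{σ(2)} z_{σ(3)}`
for column triples `x, y, z ∈ A³`, expanded using the multiplication of `A`. -/
def detLike {A : Type*} [NonUnitalCommRing A] (x y z : Fin 3 → A) : A :=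
  ∑ σ : Equiv.Perm (Fin 3), (Equiv.Perm.sign σ : ℤ) • (x (σ 0) * (y (σ 1) * z (σ 2)))

theorem Equiv.Perm.sum_sign_smul_rotate {M : Type*} [AddCommGroup M]
    (f : Fin 3 → Fin 3 → Fin 3 → M) :
    ∑ σ : Equiv.Perm (Fin 3), (Equiv.Perm.sign σ : ℤ) • f (σ 1) (σ 2) (σ 0)
      = ∑ σ : Equiv.Perm (Fin 3), (Equiv.Perm.sign σ : ℤ) • f (σ 0) (σ 1) (σ 2) := by
  refine Fintype.sum_equiv (Equiv.mulRight (finRotate 3)) _ _ fun σ => ?_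
  have hsign : Equiv.Perm.sign (finRotate 3) = 1 := by decide
  simp [hsign]

section

variable {A : Type*} [NonUnitalCommRing A]

theorem detLike_rotate_eq_sum (x y z : Fin 3 → A) :
    detLike y z x = ∑ σ : Equiv.Perm (Fin 3),
      (Equiv.Perm.sign σ : ℤ) • (y (σ 1) * (z (σ 2) * x (σ 0))) :=
  (Equiv.Perm.sum_sign_smul_rotate fun j k i => y j * (z k * x i)).symm

theorem detLike_rotate_rotate_eq_sum (x y z : Fin 3 → A) :
    detLike z x y = ∑ σ : Equiv.Perm (Fin 3),
      (Equiv.Perm.sign σ : ℤ) • (z (σ 2) * (x (σ 0) * y (σ 1))) :=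
  Equiv.Perm.sum_sign_smul_rotate fun i j k => z k * (x i * y j)

theorem nijenhuis_mul_mul {F : Type*} [FunLike F A A] [AddMonoidHomClass F A A] (N : F)
    (hN : ∀ x y : A, N x * N y = N (N x * y + x * N y - N (x * y))) (a b c : A) :
    N a * (N b * N c)
      = N (N a * (N b * c) + N b * (N c * a) + N c * (N a * b))
        - N (N (N a * (b * c) + N b * (c * a) + N c * (a * b)))
        + N (N (N (a * (b * c)))) := by
  have hw := hN (N a * b + a * N b - N (a * b)) c
  rw [← hN a b] at hw
  rw [← mul_assoc, hw, sub_mul, hN (a * b) c]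
  simp only [mul_add, mul_sub, map_add, map_sub, mul_comm, mul_assoc, mul_left_comm]
  abel

end

theorem nijenhuis_detLike_identity_general
    {K : Type*} [Field K] {A : Type*} [NonUnitalCommRing A] [Module K A]
    (N : A →ₗ[K] A)
    (hN : ∀ x y : A, N x * N y = N (N x * y + x * N y - N (x * y)))
    (x y z : Fin 3 → A) :
    detLike (fun i => N (x i)) (fun i => N (y i)) (fun i => N (z i))
      = N (detLike (fun i => N (x i)) (fun i => N (y i)) z
            + detLike (fun i => N (y i)) (fun i => N (z i)) x
            + detLike (fun i => N (z i)) (fun i => N (x i)) y)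
        - N (N (detLike (fun i => N (x i)) y z
            + detLike (fun i => N (y i)) z x
            + detLike (fun i => N (z i)) x y))
        + N (N (N (detLike x y z))) := by
  rw [detLike_rotate_eq_sum x, detLike_rotate_rotate_eq_sum _ y, detLike_rotate_eq_sum x,
    detLike_rotate_rotate_eq_sum _ y]
  simp only [detLike, nijenhuis_mul_mul N hN, map_add, smul_add, smul_sub,
    Finset.sum_add_distrib, Finset.sum_sub_distrib, map_sum, map_zsmul]

/-- If `N` is a Nijenhuis operator on a commutative associative
algebra `(A, *)` over `K`, and `N` acts componentwise on triples, then
`|N(x) N(y) N(z)| = N(|N(x) N(y) z| + |N(y) N(z) x| + |N(z) N(x) y|)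
  − N²(|N(x) y z| + |N(y) z x| + |N(z) x y|) + N³(|x y z|)`. -/
theorem nijenhuis_detLike_identity
    {K : Type*} [Field K] {A : Type*} [NonUnitalCommRing A] [Module K A]
    [SMulCommClass K A A] [IsScalarTower K A A]
    (N : A →ₗ[K] A)
    (hN : ∀ x y : A, N x * N y = N (N x * y + x * N y - N (x * y)))
    (x y z : Fin 3 → A) :
    detLike (fun i => N (x i)) (fun i => N (y i)) (fun i => N (z i))
      = N (detLike (fun i => N (x i)) (fun i => N (y i)) z
            + detLike (fun i => N (y i)) (fun i => N (z i)) x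
            + detLike (fun i => N (z i)) (fun i => N (x i)) y)
        - N (N (detLike (fun i => N (x i)) y z
            + detLike (fun i => N (y i)) z x
            + detLike (fun i => N (z i)) x y))
        + N (N (N (detLike x y z))) :=
  nijenhuis_detLike_identity_general N hN x y z
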